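/- (Commutative reduction.) Let b ∈ V and λ₁, λ₂ ∈ ℂ satisfy D₁ b = λ₁·b and D₂ b = λ₂·b. Then for every integer k ≥ 0, (𝒜₁𝒜₂⋯𝒜ₖ)(b) = p_k · b, i.e. the V-valued polynomial obtained by multiplying each coefficient of the scalar polynomial p_k = a₁a₂⋯aₖ 1 by the vector b, where aⱼ is the scalar operator on ℂ[x] given by aⱼ p = ((λ₁+2j)·x + λ₂)·p + (x²−1)·p′. -/
import Mathlib


/-- Multiplication by `x` on `V[x]`, where a polynomial with coefficients in `V`
is encoded as a finitely supported function `ℕ →₀ V` (its coefficients). -/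
noncomputable def xmul {V : Type*} [AddCommGroup V] [Module ℂ V] (r : ℕ →₀ V) : ℕ →₀ V :=
  Finsupp.mapDomain (· + 1) r

/-- Formal differentiation `r ↦ r′` on `V[x]`. -/
noncomputable def fder {V : Type*} [AddCommGroup V] [Module ℂ V] (r : ℕ →₀ V) : ℕ →₀ V :=
  r.sum fun n v => Finsupp.single (n - 1) ((n : ℂ) • v)

/-- Multiplication by `x² − 1` on `V[x]`. -/
noncomputable def qmul {V : Type*} [AddCommGroup V] [Module ℂ V] (r : ℕ →₀ V) : ℕ →₀ V :=
  xmul (xmul r) - r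

/-- Coefficientwise action of a linear map `D : V → V` on `V[x]`. -/
noncomputable def cmap {V : Type*} [AddCommGroup V] [Module ℂ V] (D : V →ₗ[ℂ] V)
    (r : ℕ →₀ V) : ℕ →₀ V :=
  Finsupp.mapRange D (map_zero D) r

/-- The operator `𝒜ⱼ r = x·(2j·r + D₁r) + D₂r + (x²−1)·r′` on `V[x]`. -/
noncomputable def Aop {V : Type*} [AddCommGroup V] [Module ℂ V] (D₁ D₂ : V →ₗ[ℂ] V)
    (j : ℕ) (r : ℕ →₀ V) : ℕ →₀ V :=
  xmul ((2 * (j : ℂ)) • r + cmap D₁ r) + cmap D₂ r + qmul (fder r)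

/-- The composition `𝒜₁𝒜₂⋯𝒜ₖ` on `V[x]` (the identity for `k = 0`). -/
noncomputable def Aprod {V : Type*} [AddCommGroup V] [Module ℂ V] (D₁ D₂ : V →ₗ[ℂ] V) :
    ℕ → (ℕ →₀ V) → (ℕ →₀ V)
  | 0 => id
  | (k + 1) => fun r => Aprod D₁ D₂ k (Aop D₁ D₂ (k + 1) r)

/-- The scalar operator `aⱼ p = ((λ₁+2j)·x + λ₂)·p + (x²−1)·p′` on `ℂ[x]`. -/
noncomputable def aC (l₁ l₂ : ℂ) (j : ℕ) (p : Polynomial ℂ) : Polynomial ℂ :=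
  (Polynomial.C (l₁ + 2 * (j : ℂ)) * Polynomial.X + Polynomial.C l₂) * p +
    (Polynomial.X ^ 2 - 1) * Polynomial.derivative p

/-- The composition `a₁a₂⋯aₖ` on `ℂ[x]` (identity for `k = 0`). -/
noncomputable def aCIter (l₁ l₂ : ℂ) : ℕ → Polynomial ℂ → Polynomial ℂ
  | 0 => id
  | (k + 1) => fun p => aCIter l₁ l₂ k (aC l₁ l₂ (k + 1) p)

/-- The scalar polynomial `pₖ = a₁a₂⋯aₖ 1`. -/
noncomputable def pkC (l₁ l₂ : ℂ) (k : ℕ) : Polynomial ℂ :=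
  aCIter l₁ l₂ k 1

lemma xmul_zero' {V : Type*} [AddCommGroup V] [Module ℂ V] (r : ℕ →₀ V) :
    xmul r 0 = 0 := by
  apply Finsupp.mapDomain_notin_range
  simp

lemma xmul_succ' {V : Type*} [AddCommGroup V] [Module ℂ V] (r : ℕ →₀ V) (i : ℕ) :
    xmul r (i + 1) = r i :=
  Finsupp.mapDomain_apply (fun a b h => by omega) r i

lemma fder_apply' {V : Type*} [AddCommGroup V] [Module ℂ V] (r : ℕ →₀ V) (i : ℕ) :
    fder r i = ((i : ℂ) + 1) • r (i + 1) := by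
  classical
  rw [fder, Finsupp.sum_apply, Finsupp.sum, Finset.sum_eq_single (i + 1)]
  · simp [Finsupp.single_apply]
  · intro n _ hne
    rw [Finsupp.single_apply]
    split_ifs with h
    · have : n = 0 := by omega
      simp [this]
    · rfl
  · intro h
    rw [Finsupp.notMem_support_iff.mp h]
    simp

lemma aC_coeff (l₁ l₂ : ℂ) (j : ℕ) (p : Polynomial ℂ) (i : ℕ) :
    (aC l₁ l₂ j p).coeff i =
      (l₁ + 2 * j) * (Polynomial.X * p).coeff i + l₂ * p.coeff i +
        (Polynomial.X * (Polynomial.X * Polynomial.derivative p)).coeff i -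
        (Polynomial.derivative p).coeff i := by
  have h : aC l₁ l₂ j p =
      Polynomial.C (l₁ + 2 * j) * (Polynomial.X * p) + Polynomial.C l₂ * p +
        Polynomial.X * (Polynomial.X * Polynomial.derivative p) - Polynomial.derivative p := by
    rw [aC]; ring
  rw [h, Polynomial.coeff_sub, Polynomial.coeff_add, Polynomial.coeff_add,
    Polynomial.coeff_C_mul, Polynomial.coeff_C_mul]

lemma Aop_step {V : Type*} [AddCommGroup V] [Module ℂ V] (D₁ D₂ : V →ₗ[ℂ] V)
    (b : V) (l₁ l₂ : ℂ) (hb₁ : D₁ b = l₁ • b) (hb₂ : D₂ b = l₂ • b)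
    (p : Polynomial ℂ) (r : ℕ →₀ V) (hr : ∀ i, r i = p.coeff i • b) (j i : ℕ) :
    Aop D₁ D₂ j r i = (aC l₁ l₂ j p).coeff i • b := by
  have hD₁ : ∀ c : ℂ, D₁ (c • b) = (l₁ * c) • b := fun c => by
    rw [map_smul, hb₁, smul_smul, mul_comm]
  have hD₂ : ∀ c : ℂ, D₂ (c • b) = (l₂ * c) • b := fun c => by
    rw [map_smul, hb₂, smul_smul, mul_comm]
  have hfd : ∀ m : ℕ, fder r m = (((m : ℂ) + 1) * p.coeff (m + 1)) • b := by
    intro m; rw [fder_apply', hr, smul_smul]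
  rw [aC_coeff]
  simp only [Aop, qmul, Finsupp.add_apply, Finsupp.sub_apply, cmap, Finsupp.mapRange_apply]
  rcases i with _ | i
  · rw [xmul_zero', xmul_zero', hr, hD₂, hfd, Polynomial.coeff_derivative]
    simp only [Polynomial.mul_coeff_zero, Polynomial.coeff_X_zero, zero_mul]
    push_cast
    module
  · rw [xmul_succ', Finsupp.add_apply, Finsupp.smul_apply, Finsupp.mapRange_apply,
      hr i, hr (i+1), hD₁, hD₂, hfd, Polynomial.coeff_derivative, Polynomial.coeff_X_mul]
    rcases i with _ | i
    · rw [xmul_succ', xmul_zero']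
      rw [show ((0:ℕ)+1 : ℕ) = 1 from rfl, Polynomial.coeff_X_mul,
        Polynomial.mul_coeff_zero, Polynomial.coeff_X_zero, zero_mul]
      push_cast
      module
    · rw [xmul_succ', xmul_succ', hfd]
      simp only [Polynomial.coeff_X_mul, Polynomial.coeff_derivative]
      push_cast
      module


lemma Aprod_eq {V : Type*} [AddCommGroup V] [Module ℂ V] (D₁ D₂ : V →ₗ[ℂ] V)
    (b : V) (l₁ l₂ : ℂ) (hb₁ : D₁ b = l₁ • b) (hb₂ : D₂ b = l₂ • b) :
    ∀ (k : ℕ) (p : Polynomial ℂ) (r : ℕ →₀ V), (∀ i, r i = p.coeff i • b) →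
      ∀ i, Aprod D₁ D₂ k r i = (aCIter l₁ l₂ k p).coeff i • b := by
  intro k
  induction k with
  | zero => intro p r hr i; exact hr i
  | succ k ih =>
      intro p r hr i
      exact ih (aC l₁ l₂ (k + 1) p) (Aop D₁ D₂ (k + 1) r)
        (fun m => Aop_step D₁ D₂ b l₁ l₂ hb₁ hb₂ p r hr (k + 1) m) i

/-- (Commutative reduction.) If `D₁ b = λ₁·b` and `D₂ b = λ₂·b`, then for every `k ≥ 0`,
`(𝒜₁𝒜₂⋯𝒜ₖ)(b) = pₖ · b`: each coefficient of `(𝒜₁𝒜₂⋯𝒜ₖ)(b)` is the corresponding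
coefficient of the scalar polynomial `pₖ = a₁a₂⋯aₖ 1` times the vector `b`. -/
theorem stmt_12 {V : Type*} [AddCommGroup V] [Module ℂ V] (D₁ D₂ : V →ₗ[ℂ] V)
    (b : V) (l₁ l₂ : ℂ) (hb₁ : D₁ b = l₁ • b) (hb₂ : D₂ b = l₂ • b) (k : ℕ) :
    ∀ i : ℕ, Aprod D₁ D₂ k (Finsupp.single 0 b) i = (pkC l₁ l₂ k).coeff i • b := by
  apply Aprod_eq D₁ D₂ b l₁ l₂ hb₁ hb₂ k 1
  intro i
  rcases i with _ | i <;> simp [Finsupp.single_apply, Polynomial.coeff_one]
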